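/- On seeds (x, B) with x = (x_1, ..., x_7) and B the 7×7 exchange matrix with rows (0,1,-1,0,0,0,0), (-1,0,0,1,0,0,0), (1,0,0,-1,0,0,0), (0,-1,1,0,1,-1,0), (0,0,0,-1,0,0,1), (0,0,0,1,0,0,-1), (0,0,0,0,-1,1,0), the periodicity identity s_{3,5} ∘ (μ_3 ∘ μ_5 ∘ μ_4)^3 = id holds: applying μ_4, μ_5, μ_3 in that order three times and then transposing indices 3 and 5 returns the original seed (x, B). -/

import Mathlib

open Finset

/-- A cluster seed: an `N`-tuple of cluster variables in a field `F`, together with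
an `N × N` integer exchange matrix. -/
abbrev Seed (F : Type*) (N : ℕ) : Type _ := (Fin N → F) × Matrix (Fin N) (Fin N) ℤ

variable {F : Type*} [Field F] {N : ℕ}

/-- Mutation of the cluster variables in direction `k`:
`x̃_k = (∏_{j : b_{jk} > 0} x_j^{b_{jk}} + ∏_{j : b_{jk} < 0} x_j^{-b_{jk}}) / x_k`,
and `x̃_i = x_i` for `i ≠ k`. -/
noncomputable def mutateX (s : Seed F N) (k : Fin N) : Fin N → F := fun i =>
  if i = k then
    ((∏ j, s.1 j ^ (s.2 j k).toNat) + ∏ j, s.1 j ^ (-s.2 j k).toNat) / s.1 k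
  else s.1 i

/-- Mutation of the exchange matrix in direction `k`. -/
def mutateB (B : Matrix (Fin N) (Fin N) ℤ) (k : Fin N) : Matrix (Fin N) (Fin N) ℤ :=
  Matrix.of fun i j =>
    if i = k ∨ j = k then -B i j
    else B i j + ((B i k).natAbs * B k j + B i k * (B k j).natAbs) / 2

/-- Mutation `μ_k` of a seed in direction `k`. -/
noncomputable def mutate (s : Seed F N) (k : Fin N) : Seed F N :=
  (mutateX s k, mutateB s.2 k)

/-- The operation `s_{i,j}` transposing the `i`-th and `j`-th entries of the cluster
variable tuple and simultaneously the `i`-th and `j`-th rows and columns of the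
exchange matrix. -/
def swapSeed (i j : Fin N) (s : Seed F N) : Seed F N :=
  (s.1 ∘ Equiv.swap i j, Matrix.of fun a b => s.2 (Equiv.swap i j a) (Equiv.swap i j b))

/-- The `y`-variables of a seed: `y_j = ∏_k x_k^{b_{kj}}`. -/
noncomputable def yvar (s : Seed F N) : Fin N → F := fun j => ∏ k, s.1 k ^ (s.2 k j)
/-- The 7×7 exchange matrix of the paper (indices written 0-based). -/
def B7 : Matrix (Fin 7) (Fin 7) ℤ :=
  !![0, 1, -1, 0, 0, 0, 0;
     -1, 0, 0, 1, 0, 0, 0;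
     1, 0, 0, -1, 0, 0, 0;
     0, -1, 1, 0, 1, -1, 0;
     0, 0, 0, -1, 0, 0, 1;
     0, 0, 0, 1, 0, 0, -1;
     0, 0, 0, 0, -1, 1, 0]

/-- The R-operator `R = s_{3,5} ∘ s_{2,5} ∘ s_{3,6} ∘ μ_4 ∘ μ_2 ∘ μ_6 ∘ μ_4`
(applied right to left; indices here are 0-based, so `μ_4` is `mutate · 3`, etc.). -/
noncomputable def Rop7 (s : Seed F 7) : Seed F 7 :=
  swapSeed 2 4 (swapSeed 1 4 (swapSeed 2 5
    (mutate (mutate (mutate (mutate s 3) 5) 1) 3)))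

/-- The inverse R-operator `R⁻¹ = s_{3,6} ∘ s_{2,5} ∘ s_{3,5} ∘ μ_4 ∘ μ_5 ∘ μ_3 ∘ μ_4`
(applied right to left; 0-based indices). -/
noncomputable def Rinv7 (s : Seed F 7) : Seed F 7 :=
  swapSeed 2 5 (swapSeed 1 4 (swapSeed 2 4
    (mutate (mutate (mutate (mutate s 3) 2) 4) 3)))

/-!
Each mutation is pinned down by its exchange relation `x_k x_k' = ∏ x_j^[b_jk]₊ + ∏ x_j^[-b_jk]₊`,
so the theorem is a direct computation of the nine seeds along the mutation sequence. Every cluster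
variable that appears is a Laurent polynomial whose numerator has nonnegative coefficients; hence
each exchange relation becomes a polynomial identity after clearing monomial denominators, and
each numerator is nonzero at `x` because it is nonzero at `(1, …, 1)` and `x` is algebraically
independent.
-/

theorem AlgebraicIndependent.aeval_ne_zero_of_eval_ne_zero {ι R A : Type*} [CommRing R]
    [CommRing A] [Algebra R A] {x : ι → A} (hx : AlgebraicIndependent R x)
    {p : MvPolynomial ι R} (a : ι → R) (hp : MvPolynomial.eval a p ≠ 0) :
    MvPolynomial.aeval x p ≠ 0 :=
  fun h => hp (by rw [hx.eq_zero_of_aeval_eq_zero p h, map_zero])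

theorem mutate_eq_of_mul_eq {x : Fin N → F} {B : Matrix (Fin N) (Fin N) ℤ} {k : Fin N} {z : F}
    (hk : x k ≠ 0) (h : x k * z = (∏ j, x j ^ (B j k).toNat) + ∏ j, x j ^ (-B j k).toNat) :
    mutate (x, B) k = (Function.update x k z, mutateB B k) := by
  refine Prod.ext (funext fun i => ?_) rfl
  rcases eq_or_ne i k with rfl | hi
  · simp [mutate, mutateX, ← h, hk]
  · simp [mutate, mutateX, hi]

theorem swapSeed_swapSeed {α : Type*} (i j : Fin N) (s : Seed α N) :
    swapSeed i j (swapSeed i j s) = s := by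
  ext <;> simp [swapSeed]

/-- `μ_3 ∘ μ_5 ∘ μ_4` in the paper's 1-based indexing. -/
noncomputable def mutate354 (s : Seed F 7) : Seed F 7 := mutate (mutate (mutate s 3) 4) 2

-- `B7ᵢ` and `seedB7ᵢ` are the exchange matrix and the seed after the first `i` mutations.
def B7₁ : Matrix (Fin 7) (Fin 7) ℤ :=
  !![0, 1, -1, 0, 0, 0, 0;
     -1, 0, 1, -1, 1, 0, 0;
     1, -1, 0, 1, 0, -1, 0;
     0, 1, -1, 0, -1, 1, 0;
     0, -1, 0, 1, 0, -1, 1;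
     0, 0, 1, -1, 1, 0, -1;
     0, 0, 0, 0, -1, 1, 0]

def B7₂ : Matrix (Fin 7) (Fin 7) ℤ :=
  !![0, 1, -1, 0, 0, 0, 0;
     -1, 0, 1, 0, -1, 0, 1;
     1, -1, 0, 1, 0, -1, 0;
     0, 0, -1, 0, 1, 0, 0;
     0, 1, 0, -1, 0, 1, -1;
     0, 0, 1, 0, -1, 0, 0;
     0, -1, 0, 0, 1, 0, 0]

def B7₃ : Matrix (Fin 7) (Fin 7) ℤ :=
  !![0, 0, 1, 0, 0, -1, 0;
     0, 0, -1, 1, -1, 0, 1;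
     -1, 1, 0, -1, 0, 1, 0;
     0, -1, 1, 0, 1, -1, 0;
     0, 1, 0, -1, 0, 1, -1;
     1, 0, -1, 1, -1, 0, 0;
     0, -1, 0, 0, 1, 0, 0]

def B7₄ : Matrix (Fin 7) (Fin 7) ℤ :=
  !![0, 0, 1, 0, 0, -1, 0;
     0, 0, 0, -1, 0, 0, 1;
     -1, 0, 0, 1, 0, 0, 0;
     0, 1, -1, 0, -1, 1, 0;
     0, 0, 0, 1, 0, 0, -1;
     1, 0, 0, -1, 0, 0, 0;
     0, -1, 0, 0, 1, 0, 0]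

def B7₅ : Matrix (Fin 7) (Fin 7) ℤ :=
  !![0, 0, 1, 0, 0, -1, 0;
     0, 0, 0, -1, 0, 0, 1;
     -1, 0, 0, 1, 0, 0, 0;
     0, 1, -1, 0, 1, 1, -1;
     0, 0, 0, -1, 0, 0, 1;
     1, 0, 0, -1, 0, 0, 0;
     0, -1, 0, 1, -1, 0, 0]

def B7₆ : Matrix (Fin 7) (Fin 7) ℤ :=
  !![0, 0, -1, 1, 0, -1, 0;
     0, 0, 0, -1, 0, 0, 1;
     1, 0, 0, -1, 0, 0, 0;
     -1, 1, 1, 0, 1, 1, -1;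
     0, 0, 0, -1, 0, 0, 1;
     1, 0, 0, -1, 0, 0, 0;
     0, -1, 0, 1, -1, 0, 0]

def B7₇ : Matrix (Fin 7) (Fin 7) ℤ :=
  !![0, 1, 0, -1, 1, 0, 0;
     -1, 0, 0, 1, 0, 0, 0;
     0, 0, 0, 1, 0, 0, -1;
     1, -1, -1, 0, -1, -1, 1;
     -1, 0, 0, 1, 0, 0, 0;
     0, 0, 0, 1, 0, 0, -1;
     0, 0, 1, -1, 0, 1, 0]

def B7₈ : Matrix (Fin 7) (Fin 7) ℤ :=
  !![0, 1, 0, 0, -1, 0, 0;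
     -1, 0, 0, 1, 0, 0, 0;
     0, 0, 0, 1, 0, 0, -1;
     0, -1, -1, 0, 1, -1, 1;
     1, 0, 0, -1, 0, 0, 0;
     0, 0, 0, 1, 0, 0, -1;
     0, 0, 1, -1, 0, 1, 0]

noncomputable def seedB7₃ (x : Fin 7 → F) : Seed F 7 :=
  (![x 0, x 1, (x 1 * x 3 * x 5 + x 0 * x 2 * x 4 + x 0 * x 1 * x 5) / (x 2 * x 3),
    (x 1 * x 5 + x 2 * x 4) / x 3, (x 1 * x 3 * x 5 + x 2 * x 4 * x 6 + x 1 * x 5 * x 6) / (x 3 * x 4),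
    x 5, x 6], B7₃)

noncomputable def seedB7₆ (x : Fin 7 → F) : Seed F 7 :=
  (![x 0, x 1, (x 3 + x 6) / x 4,
    (x 1 * x 3 * x 5 * x 6 + x 1 * x 3 ^ 2 * x 5 + x 0 * x 2 * x 4 * x 6 + x 0 * x 1 * x 5 * x 6
      + x 0 * x 1 * x 3 * x 5) / (x 2 * x 3 * x 4),
    (x 0 + x 3) / x 2, x 5, x 6], B7₆)

theorem mutate354_B7 {x : Fin 7 → F} (hx : ∀ i, x i ≠ 0) :
    mutate354 (x, B7) = seedB7₃ x := by
  rw [mutate354, seedB7₃,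
    mutate_eq_of_mul_eq (k := 3) (B := B7) (z := (x 1 * x 5 + x 2 * x 4) / x 3) (hx 3),
    show mutateB B7 3 = B7₁ by decide,
    mutate_eq_of_mul_eq (k := 4) (B := B7₁)
      (z := (x 1 * x 3 * x 5 + x 2 * x 4 * x 6 + x 1 * x 5 * x 6) / (x 3 * x 4)) (by simpa using hx 4),
    show mutateB B7₁ 4 = B7₂ by decide,
    mutate_eq_of_mul_eq (k := 2) (B := B7₂)
      (z := (x 1 * x 3 * x 5 + x 0 * x 2 * x 4 + x 0 * x 1 * x 5) / (x 2 * x 3)) (by simpa using hx 2),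
    show mutateB B7₂ 2 = B7₃ by decide]
  · congr 1
    funext i
    fin_cases i <;> rfl
  -- the three exchange relations
  all_goals
    simp only [B7, B7₁, B7₂, Matrix.of_apply, Matrix.cons_val, Fin.prod_univ_seven,
      Function.update_apply, Fin.reduceEq, ↓reduceIte, Int.reduceNeg, Int.reduceToNat]
    field_simp [hx]
  all_goals ring

theorem mutate354_seedB7₃ {x : Fin 7 → F} (hx : ∀ i, x i ≠ 0)
    (hA : x 1 * x 5 + x 2 * x 4 ≠ 0)
    (hB : x 1 * x 3 * x 5 + x 2 * x 4 * x 6 + x 1 * x 5 * x 6 ≠ 0)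
    (hC : x 1 * x 3 * x 5 + x 0 * x 2 * x 4 + x 0 * x 1 * x 5 ≠ 0) :
    mutate354 (seedB7₃ x) = seedB7₆ x := by
  rw [mutate354, seedB7₃, seedB7₆,
    mutate_eq_of_mul_eq (k := 3) (B := B7₃)
      (z := (x 1 * x 3 * x 5 * x 6 + x 1 * x 3 ^ 2 * x 5 + x 0 * x 2 * x 4 * x 6 + x 0 * x 1 * x 5 * x 6
          + x 0 * x 1 * x 3 * x 5) / (x 2 * x 3 * x 4)) (by simp [hA, hx]),
    show mutateB B7₃ 3 = B7₄ by decide,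
    mutate_eq_of_mul_eq (k := 4) (B := B7₄) (z := (x 0 + x 3) / x 2) (by simp [hB, hx]),
    show mutateB B7₄ 4 = B7₅ by decide,
    mutate_eq_of_mul_eq (k := 2) (B := B7₅) (z := (x 3 + x 6) / x 4) (by simp [hC, hx]),
    show mutateB B7₅ 2 = B7₆ by decide]
  · congr 1
    funext i
    fin_cases i <;> rfl
  all_goals
    simp only [B7₃, B7₄, B7₅, Matrix.of_apply, Matrix.cons_val, Fin.prod_univ_seven,
      Function.update_apply, Fin.reduceEq, ↓reduceIte, Int.reduceNeg, Int.reduceToNat]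
    field_simp [hx]
  all_goals ring

theorem mutate354_seedB7₆ {x : Fin 7 → F} (hx : ∀ i, x i ≠ 0)
    (hD : x 1 * x 3 * x 5 * x 6 + x 1 * x 3 ^ 2 * x 5 + x 0 * x 2 * x 4 * x 6 + x 0 * x 1 * x 5 * x 6
          + x 0 * x 1 * x 3 * x 5 ≠ 0)
    (hE : x 0 + x 3 ≠ 0) (hF : x 3 + x 6 ≠ 0) :
    mutate354 (seedB7₆ x) = swapSeed 2 4 (x, B7) := by
  rw [mutate354, seedB7₆,
    mutate_eq_of_mul_eq (k := 3) (B := B7₆) (z := x 3) (by simp [hD, hx]),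
    show mutateB B7₆ 3 = B7₇ by decide,
    mutate_eq_of_mul_eq (k := 4) (B := B7₇) (z := x 2) (by simp [hE, hx]),
    show mutateB B7₇ 4 = B7₈ by decide,
    mutate_eq_of_mul_eq (k := 2) (B := B7₈) (z := x 4) (by simp [hF, hx]),
    show mutateB B7₈ 2 = Matrix.of fun a b => B7 (Equiv.swap 2 4 a) (Equiv.swap 2 4 b) by decide]
  · congr 1
    funext i
    fin_cases i <;> rfl
  all_goals
    simp only [B7₆, B7₇, B7₈, Matrix.of_apply, Matrix.cons_val, Fin.prod_univ_seven,
      Function.update_apply, Fin.reduceEq, ↓reduceIte, Int.reduceNeg, Int.reduceToNat]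
    field_simp [hx]
  all_goals ring

/-- the periodicity `s_{3,5} ∘ (μ_3 ∘ μ_5 ∘ μ_4)³ = id`: applying
`μ_4, μ_5, μ_3` in that order three times and then transposing indices 3 and 5
(0-based: mutations at `3, 4, 2` and the swap `swapSeed 2 4`) returns the seed. -/
theorem periodicity_354 {F : Type*} [Field F]
    (x : Fin 7 → F) (hx : AlgebraicIndependent ℤ x) :
    swapSeed 2 4
      (mutate (mutate (mutate
        (mutate (mutate (mutate
          (mutate (mutate (mutate (x, B7) 3) 4) 2) 3) 4) 2) 3) 4) 2)
      = (x, B7) := by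
  have ne_zero (p : MvPolynomial (Fin 7) ℤ) (hp : MvPolynomial.eval 1 p ≠ 0) :
      MvPolynomial.aeval x p ≠ 0 :=
    hx.aeval_ne_zero_of_eval_ne_zero 1 hp
  have hA := ne_zero (.X 1 * .X 5 + .X 2 * .X 4) (by norm_num)
  have hB := ne_zero (.X 1 * .X 3 * .X 5 + .X 2 * .X 4 * .X 6 + .X 1 * .X 5 * .X 6) (by norm_num)
  have hC := ne_zero (.X 1 * .X 3 * .X 5 + .X 0 * .X 2 * .X 4 + .X 0 * .X 1 * .X 5) (by norm_num)
  have hD := ne_zero (.X 1 * .X 3 * .X 5 * .X 6 + .X 1 * .X 3 ^ 2 * .X 5 + .X 0 * .X 2 * .X 4 * .X 6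
    + .X 0 * .X 1 * .X 5 * .X 6 + .X 0 * .X 1 * .X 3 * .X 5) (by norm_num)
  have hE := ne_zero (.X 0 + .X 3) (by norm_num)
  have hF := ne_zero (.X 3 + .X 6) (by norm_num)
  simp only [map_add, map_mul, map_pow, MvPolynomial.aeval_X] at hA hB hC hD hE hF
  change swapSeed 2 4 (mutate354 (mutate354 (mutate354 (x, B7)))) = (x, B7)
  rw [mutate354_B7 hx.ne_zero, mutate354_seedB7₃ hx.ne_zero hA hB hC,
    mutate354_seedB7₆ hx.ne_zero hD hE hF, swapSeed_swapSeed]
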